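/- Monotone decay of the discrete energy along trajectories of the second-order IEQ-DG scheme (Theorem 3.2, trajectory form): let Δt > 0, let P : H → V be the orthogonal projection onto V, and for each n ∈ ℕ let Tₙ : H → H be a self-adjoint bounded linear operator. Let (uₙ) and (qₙ) be sequences in V and (Uₙ) a sequence in H such that for every n ∈ ℕ: U_{n+1} = P Uₙ + (1/2) Tₙ (u_{n+1} − uₙ), and for all φ, ψ ∈ V: ⟨(u_{n+1} − uₙ)/Δt, φ⟩ + b((uₙ + u_{n+1})/2, φ) = −A(φ, (qₙ + q_{n+1})/2) − (1/2)⟨Tₙ (U_{n+1} + P Uₙ), φ⟩ and ⟨qₙ, ψ⟩ = A(uₙ, ψ). Then for every n ∈ ℕ: E(u_{n+1}, q_{n+1}, P U_{n+1}) ≤ E(uₙ, qₙ, P Uₙ) − (1/Δt)‖u_{n+1} − uₙ‖²; in particular the sequence of discrete energies Eⁿ := E(uₙ, qₙ, P Uₙ) is nonincreasing in n, for any time step Δt > 0. -/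

import Mathlib

/-!
Testing the first scheme equation with `φ = u_{n+1} - u_n` turns every term into a difference of
squares: the `b`-term because `b` is symmetric, the `A`-term through the second equation
`⟨q, ψ⟩ = A(u, ψ)`, and the `T`-term because `T` is self-adjoint and the update of `U` gives
`T(u_{n+1} - u_n) = 2(U_{n+1} - P U_n)`. The result is an exact energy identity with `‖U_{n+1}‖`
in place of `‖P U_{n+1}‖`, and the projection `P` does not increase norms.
-/

open scoped InnerProductSpace

theorem LinearMap.apply_add_sub_of_symm {R M : Type*} [CommRing R] [AddCommGroup M] [Module R M]
    (b : M →ₗ[R] M →ₗ[R] R) (hb : ∀ x y, b x y = b y x) (x y : M) :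
    b (x + y) (x - y) = b x x - b y y := by
  simp only [map_add, map_sub, LinearMap.add_apply, hb y x]
  ring

theorem real_inner_add_sub_eq_norm_sq_sub_norm_sq {F : Type*} [NormedAddCommGroup F]
    [InnerProductSpace ℝ F] (x y : F) : ⟪x + y, x - y⟫_ℝ = ‖x‖ ^ 2 - ‖y‖ ^ 2 := by
  simp only [inner_add_left, inner_sub_right, real_inner_self_eq_norm_sq, real_inner_comm x y]
  ring

section IEQ

variable {H : Type*} [NormedAddCommGroup H] [InnerProductSpace ℝ H] {V : Submodule ℝ H}

noncomputable def ieqEnergy (b : V →ₗ[ℝ] V →ₗ[ℝ] ℝ) (u q : V) (U : H) : ℝ :=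
  (1 / 2) * ‖(q : H)‖ ^ 2 + ‖U‖ ^ 2 + (1 / 2) * b u u

/-- `W` plays the role of `P U_n`; the step identity holds for any `W`. -/
structure IsIEQStep (A b : V →ₗ[ℝ] V →ₗ[ℝ] ℝ) (Δt : ℝ) (T : H →L[ℝ] H)
    (u q : V) (W : H) (u' q' : V) (U' : H) : Prop where
  aux_eq : U' = W + (1 / 2 : ℝ) • T ((u' : H) - u)
  evolution_eq : ∀ φ : V,
    ⟪(1 / Δt) • ((u' : H) - u), φ⟫_ℝ + b ((1 / 2 : ℝ) • (u + u')) φ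
      = -A φ ((1 / 2 : ℝ) • (q + q')) - (1 / 2) * ⟪T (U' + W), φ⟫_ℝ
  flux_eq : ∀ ψ : V, ⟪(q : H), ψ⟫_ℝ = A u ψ
  flux_eq' : ∀ ψ : V, ⟪(q' : H), ψ⟫_ℝ = A u' ψ

variable {A b : V →ₗ[ℝ] V →ₗ[ℝ] ℝ} {Δt : ℝ} {T : H →L[ℝ] H} {u q u' q' : V} {W U' : H}

namespace IsIEQStep

theorem energy_identity (hb : ∀ x y, b x y = b y x) (hT : (T : H →ₗ[ℝ] H).IsSymmetric)
    (h : IsIEQStep A b Δt T u q W u' q' U') :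
    ieqEnergy b u' q' U' = ieqEnergy b u q W - (1 / Δt) * ‖(u' : H) - u‖ ^ 2 := by
  have hδ : ((u' - u : V) : H) = (u' : H) - u := rfl
  have h_time : ⟪(1 / Δt) • ((u' : H) - u), ((u' - u : V) : H)⟫_ℝ
      = (1 / Δt) * ‖(u' : H) - u‖ ^ 2 := by
    rw [hδ, real_inner_smul_left, real_inner_self_eq_norm_sq]
  have h_penalty : b ((1 / 2 : ℝ) • (u + u')) (u' - u) = (1 / 2) * (b u' u' - b u u) := by
    rw [map_smul, LinearMap.smul_apply, add_comm, b.apply_add_sub_of_symm hb, smul_eq_mul]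
  have h_flux : A (u' - u) ((1 / 2 : ℝ) • (q + q'))
      = (1 / 2) * (‖(q' : H)‖ ^ 2 - ‖(q : H)‖ ^ 2) := by
    rw [map_sub, LinearMap.sub_apply, ← h.flux_eq', ← h.flux_eq, ← inner_sub_left,
      Submodule.coe_smul, Submodule.coe_add, real_inner_smul_right, add_comm (q : H),
      real_inner_comm, real_inner_add_sub_eq_norm_sq_sub_norm_sq]
  have hTδ : T ((u' : H) - u) = (2 : ℝ) • (U' - W) := by
    rw [h.aux_eq, add_sub_cancel_left, smul_smul]
    norm_num
  have h_aux : ⟪T (U' + W), ((u' - u : V) : H)⟫_ℝ = 2 * (‖U'‖ ^ 2 - ‖W‖ ^ 2) := by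
    calc ⟪T (U' + W), ((u' - u : V) : H)⟫_ℝ = ⟪U' + W, T ((u' : H) - u)⟫_ℝ := hT _ _
      _ = 2 * (‖U'‖ ^ 2 - ‖W‖ ^ 2) := by
        rw [hTδ, real_inner_smul_right, real_inner_add_sub_eq_norm_sq_sub_norm_sq]
  have := h.evolution_eq (u' - u)
  rw [h_time, h_penalty, h_flux, h_aux] at this
  unfold ieqEnergy
  linarith

theorem energy_proj_le [V.HasOrthogonalProjection] (hb : ∀ x y, b x y = b y x)
    (hT : (T : H →ₗ[ℝ] H).IsSymmetric) (h : IsIEQStep A b Δt T u q W u' q' U') :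
    ieqEnergy b u' q' (V.orthogonalProjectionOnto U')
      ≤ ieqEnergy b u q W - (1 / Δt) * ‖(u' : H) - u‖ ^ 2 := by
  rw [← h.energy_identity hb hT]
  unfold ieqEnergy
  gcongr
  exact V.norm_orthogonalProjectionOnto_apply_le U'

end IsIEQStep

end IEQ

theorem stmt_11_general
    {H : Type*} [NormedAddCommGroup H] [InnerProductSpace ℝ H]
    (V : Submodule ℝ H) [FiniteDimensional ℝ V]
    (A : V →ₗ[ℝ] V →ₗ[ℝ] ℝ)
    (b : V →ₗ[ℝ] V →ₗ[ℝ] ℝ)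
    (hb_symm : ∀ x y : V, b x y = b y x)
    (E : V → V → H → ℝ)
    (hE : ∀ (u q : V) (U : H), E u q U = (1/2) * ‖(q : H)‖^2 + ‖U‖^2 + (1/2) * b u u)
    (Δt : ℝ) (hΔt : 0 < Δt)
    (T : ℕ → H →L[ℝ] H)
    (hT : ∀ n : ℕ, ∀ x y : H, (inner ℝ (T n x) y : ℝ) = (inner ℝ x (T n y) : ℝ))
    (u q : ℕ → V) (U : ℕ → H)
    (hU : ∀ n : ℕ,
      U (n+1) = ((V.orthogonalProjectionOnto (U n) : V) : H)
        + (1/2 : ℝ) • T n ((u (n+1) : H) - (u n : H)))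
    (heq1 : ∀ n : ℕ, ∀ φ : V,
      (inner ℝ ((1/Δt) • ((u (n+1) : H) - (u n : H))) (φ : H) : ℝ)
          + b ((1/2 : ℝ) • (u n + u (n+1))) φ
        = -A φ ((1/2 : ℝ) • (q n + q (n+1)))
          - (1/2) * (inner ℝ (T n (U (n+1) + ((V.orthogonalProjectionOnto (U n) : V) : H)))
              (φ : H) : ℝ))
    (heq2 : ∀ n : ℕ, ∀ ψ : V, (inner ℝ (q n : H) (ψ : H) : ℝ) = A (u n) ψ) :
    (∀ n : ℕ,
      E (u (n+1)) (q (n+1)) ((V.orthogonalProjectionOnto (U (n+1)) : V) : H)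
        ≤ E (u n) (q n) ((V.orthogonalProjectionOnto (U n) : V) : H)
          - (1/Δt) * ‖(u (n+1) : H) - (u n : H)‖^2)
    ∧ Antitone (fun n : ℕ =>
        E (u n) (q n) ((V.orthogonalProjectionOnto (U n) : V) : H)) := by
  obtain rfl : E = ieqEnergy b := by
    funext u q U
    exact hE u q U
  have decay (n : ℕ) := IsIEQStep.energy_proj_le hb_symm (hT n)
    ⟨hU n, heq1 n, heq2 n, heq2 (n + 1)⟩
  refine ⟨decay, antitone_nat_of_succ_le fun n => (decay n).trans ?_⟩
  have : 0 ≤ (1 / Δt) * ‖(u (n + 1) : H) - u n‖ ^ 2 := by positivity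
  linarith

/-- Monotone decay of the discrete energy along trajectories of the second-order
IEQ-DG scheme (Theorem 3.2, trajectory form). -/
theorem stmt_11
    {H : Type*} [NormedAddCommGroup H] [InnerProductSpace ℝ H] [CompleteSpace H]
    (V : Submodule ℝ H) [FiniteDimensional ℝ V]
    (A : V →ₗ[ℝ] V →ₗ[ℝ] ℝ)
    (b : V →ₗ[ℝ] V →ₗ[ℝ] ℝ)
    (hb_symm : ∀ x y : V, b x y = b y x)
    (hb_pos : ∀ x : V, 0 ≤ b x x)
    (E : V → V → H → ℝ)
    (hE : ∀ (u q : V) (U : H), E u q U = (1/2) * ‖(q : H)‖^2 + ‖U‖^2 + (1/2) * b u u)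
    (Δt : ℝ) (hΔt : 0 < Δt)
    (T : ℕ → H →L[ℝ] H)
    (hT : ∀ n : ℕ, ∀ x y : H, (inner ℝ (T n x) y : ℝ) = (inner ℝ x (T n y) : ℝ))
    (u q : ℕ → V) (U : ℕ → H)
    (hU : ∀ n : ℕ,
      U (n+1) = ((V.orthogonalProjectionOnto (U n) : V) : H)
        + (1/2 : ℝ) • T n ((u (n+1) : H) - (u n : H)))
    (heq1 : ∀ n : ℕ, ∀ φ : V,
      (inner ℝ ((1/Δt) • ((u (n+1) : H) - (u n : H))) (φ : H) : ℝ)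
          + b ((1/2 : ℝ) • (u n + u (n+1))) φ
        = -A φ ((1/2 : ℝ) • (q n + q (n+1)))
          - (1/2) * (inner ℝ (T n (U (n+1) + ((V.orthogonalProjectionOnto (U n) : V) : H)))
              (φ : H) : ℝ))
    (heq2 : ∀ n : ℕ, ∀ ψ : V, (inner ℝ (q n : H) (ψ : H) : ℝ) = A (u n) ψ) :
    (∀ n : ℕ,
      E (u (n+1)) (q (n+1)) ((V.orthogonalProjectionOnto (U (n+1)) : V) : H)
        ≤ E (u n) (q n) ((V.orthogonalProjectionOnto (U n) : V) : H)
          - (1/Δt) * ‖(u (n+1) : H) - (u n : H)‖^2)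
    ∧ Antitone (fun n : ℕ =>
        E (u n) (q n) ((V.orthogonalProjectionOnto (U n) : V) : H)) :=
  stmt_11_general V A b hb_symm E hE Δt hΔt T hT u q U hU heq1 heq2
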